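/- arXiv:1606.09583 — 2 statements merged into one kernel-verified Lean document; each statement's English description precedes it below -/
import Mathlib

section
/- Let T > 0 and C₁, C₂ ≥ 0. Let a, b : [0,T] → ℝ³ satisfy ‖a(t)‖ ≤ C₂ and ‖b(t)‖ ≤ C₂ for all t ∈ [0,T], and let V : [0,T] → ℝ³ be differentiable with V′(t) = (V(t) − a(t)) × b(t) for all t ∈ [0,T] (× denotes the three-dimensional cross product) and ‖V(0)‖ ≤ C₁. Then for every t ∈ [0,T], ‖V(t)‖² ≤ C₁² e^t + (e^t − 1) C₂⁴. -/
/-!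
Since `⟪V, (V - a) × b⟫ = -⟪V, a × b⟫`, the derivative `2 ⟪V, V'⟫` of `‖V‖²` is at most
`2 ‖V‖ C₂² ≤ ‖V‖² + C₂⁴`, and Grönwall's inequality for `‖V‖²` gives the bound.
-/

open Set Matrix
open scoped RealInnerProductSpace

noncomputable def cross3 (u v : EuclideanSpace ℝ (Fin 3)) : EuclideanSpace ℝ (Fin 3) :=
  (EuclideanSpace.equiv (Fin 3) ℝ).symm
    ![u 1 * v 2 - u 2 * v 1, u 2 * v 0 - u 0 * v 2, u 0 * v 1 - u 1 * v 0]

theorem norm_sq_le_gronwallBound_of_inner_deriv_right_le {E : Type*} [NormedAddCommGroup E]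
    [InnerProductSpace ℝ E] {V V' : ℝ → E} {δ K ε a b : ℝ}
    (hV : ContinuousOn V (Icc a b))
    (hV' : ∀ t ∈ Ico a b, HasDerivWithinAt V (V' t) (Ici t) t)
    (ha : ‖V a‖ ^ 2 ≤ δ) (bound : ∀ t ∈ Ico a b, 2 * ⟪V t, V' t⟫ ≤ K * ‖V t‖ ^ 2 + ε) :
    ∀ t ∈ Icc a b, ‖V t‖ ^ 2 ≤ gronwallBound δ K ε (t - a) :=
  le_gronwallBound_of_liminf_deriv_right_le (hV.norm.pow 2)
    (fun t ht _ hr => (hV' t ht).norm_sq.liminf_right_slope_le hr) ha bound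

section Cross3

variable (u v w : EuclideanSpace ℝ (Fin 3))

theorem cross3_eq_crossProduct : cross3 u v = WithLp.toLp 2 (u.ofLp ⨯₃ v.ofLp) := rfl

theorem real_inner_eq_dotProduct : ⟪u, v⟫ = u.ofLp ⬝ᵥ v.ofLp := by
  simp [EuclideanSpace.inner_eq_star_dotProduct, dotProduct_comm]

theorem inner_self_cross3 : ⟪u, cross3 u v⟫ = 0 := by
  simp [real_inner_eq_dotProduct, cross3_eq_crossProduct, dot_self_cross]

theorem cross3_sub_left : cross3 (u - w) v = cross3 u v - cross3 w v := by
  simp [cross3_eq_crossProduct]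

theorem norm_cross3_sq : ‖cross3 u v‖ ^ 2 = ‖u‖ ^ 2 * ‖v‖ ^ 2 - ⟪u, v⟫ ^ 2 := by
  simp only [← real_inner_self_eq_norm_sq, real_inner_eq_dotProduct, cross3_eq_crossProduct,
    cross_dot_cross, dotProduct_comm v.ofLp u.ofLp]
  ring

theorem norm_cross3_le : ‖cross3 u v‖ ≤ ‖u‖ * ‖v‖ := by
  refine (pow_le_pow_iff_left₀ (norm_nonneg _) (by positivity) two_ne_zero).1 ?_
  rw [norm_cross3_sq, mul_pow]
  linarith [sq_nonneg ⟪u, v⟫]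

theorem two_inner_cross3_sub_le {C : ℝ} (v a b : EuclideanSpace ℝ (Fin 3))
    (ha : ‖a‖ ≤ C) (hb : ‖b‖ ≤ C) :
    2 * ⟪v, cross3 (v - a) b⟫ ≤ ‖v‖ ^ 2 + C ^ 4 := by
  have hab : ‖cross3 a b‖ ≤ C ^ 2 := (norm_cross3_le a b).trans <| by
    rw [sq]; exact mul_le_mul ha hb (norm_nonneg b) ((norm_nonneg a).trans ha)
  calc 2 * ⟪v, cross3 (v - a) b⟫ = 2 * -⟪v, cross3 a b⟫ := by
        rw [cross3_sub_left, inner_sub_right, inner_self_cross3, zero_sub]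
    _ ≤ 2 * (‖v‖ * ‖cross3 a b‖) := by
        gcongr
        exact (neg_le_abs _).trans (abs_real_inner_le_norm _ _)
    _ ≤ 2 * (‖v‖ * C ^ 2) := by gcongr
    _ ≤ ‖v‖ ^ 2 + C ^ 4 := by nlinarith [two_mul_le_add_sq ‖v‖ (C ^ 2)]

end Cross3

theorem characteristic_velocity_bound_general (T : ℝ)
    (C₁ C₂ : ℝ)
    (a b V : ℝ → EuclideanSpace ℝ (Fin 3))
    (ha : ∀ t ∈ Set.Icc (0 : ℝ) T, ‖a t‖ ≤ C₂)
    (hb : ∀ t ∈ Set.Icc (0 : ℝ) T, ‖b t‖ ≤ C₂)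
    (hV : ∀ t ∈ Set.Icc (0 : ℝ) T, HasDerivAt V (cross3 (V t - a t) (b t)) t)
    (hV0 : ‖V 0‖ ≤ C₁) :
    ∀ t ∈ Set.Icc (0 : ℝ) T,
      ‖V t‖ ^ 2 ≤ C₁ ^ 2 * Real.exp t + (Real.exp t - 1) * C₂ ^ 4 := by
  intro t ht
  have h := norm_sq_le_gronwallBound_of_inner_deriv_right_le (K := 1)
    (fun s hs => (hV s hs).continuousAt.continuousWithinAt)
    (fun s hs => (hV s (Ico_subset_Icc_self hs)).hasDerivWithinAt)
    (pow_le_pow_left₀ (norm_nonneg _) hV0 2)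
    (fun s hs => by
      rw [one_mul]
      exact two_inner_cross3_sub_le _ _ _ (ha s (Ico_subset_Icc_self hs))
        (hb s (Ico_subset_Icc_self hs)))
    t ht
  rw [gronwallBound_of_K_ne_0 one_ne_zero] at h
  simpa [mul_comm] using h

/-- Growth bound for the velocity component of the Vlasov characteristics:
if `V′ = (V − a) × b` with `‖a‖, ‖b‖ ≤ C₂` on `[0,T]` and `‖V(0)‖ ≤ C₁`, then
`‖V(t)‖² ≤ C₁² eᵗ + (eᵗ − 1) C₂⁴` on `[0,T]`. -/
theorem characteristic_velocity_bound (T : ℝ) (hT : 0 < T)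
    (C₁ C₂ : ℝ) (hC₁ : 0 ≤ C₁) (hC₂ : 0 ≤ C₂)
    (a b V : ℝ → EuclideanSpace ℝ (Fin 3))
    (ha : ∀ t ∈ Set.Icc (0 : ℝ) T, ‖a t‖ ≤ C₂)
    (hb : ∀ t ∈ Set.Icc (0 : ℝ) T, ‖b t‖ ≤ C₂)
    (hV : ∀ t ∈ Set.Icc (0 : ℝ) T, HasDerivAt V (cross3 (V t - a t) (b t)) t)
    (hV0 : ‖V 0‖ ≤ C₁) :
    ∀ t ∈ Set.Icc (0 : ℝ) T,
      ‖V t‖ ^ 2 ≤ C₁ ^ 2 * Real.exp t + (Real.exp t - 1) * C₂ ^ 4 :=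
  characteristic_velocity_bound_general T C₁ C₂ a b V ha hb hV hV0
end

section
/- Let T > 0, let C ≥ 0 and K ≥ 0, and let f_k, f : (0,T) × T³ × ℝ³ → ℝ be measurable with 0 ≤ f_k ≤ C a.e. for every k and 0 ≤ f ≤ C a.e. Assume: (i) for every g ∈ L¹((0,T) × T³ × ℝ³), ∫ f_k g → ∫ f g as k → ∞ (weak* convergence in L^∞); and (ii) ∫_{(0,T)×T³×ℝ³} |v|² f_k(t,x,v) dv dx dt ≤ K for every k. Then for every φ ∈ L^∞((0,T) × T³) with φ ≥ 0 a.e., the function (t,x,v) ↦ |v| f(t,x,v) φ(t,x) is integrable and ∫_{(0,T)×T³×ℝ³} |v| f_k(t,x,v) φ(t,x) dv dx dt → ∫_{(0,T)×T³×ℝ³} |v| f(t,x,v) φ(t,x) dv dx dt as k → ∞. -/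
open MeasureTheory ENNReal Filter Topology

local instance : Fact (0 < 2 * Real.pi) := ⟨by positivity⟩

/-- The spatial torus `T³ = (ℝ/2πℤ)³`. -/
abbrev Torus3 : Type := Fin 3 → AddCircle (2 * Real.pi)

/-- The velocity space `ℝ³` with the Euclidean norm. -/
abbrev Vel3 : Type := EuclideanSpace ℝ (Fin 3)

/-- The measure on `(0,T) × T³ × ℝ³`. -/
noncomputable def μT (T : ℝ) : Measure (ℝ × Torus3 × Vel3) :=
  (volume.restrict (Set.Ioo 0 T)).prod volume

/-- The measure on `(0,T) × T³`. -/
noncomputable def νT (T : ℝ) : Measure (ℝ × Torus3) :=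
  (volume.restrict (Set.Ioo 0 T)).prod volume

/-!
Write `w = |v| φ` and cut it off at speed `R`: `w_R = 1_{|v| ≤ R} w` is integrable, so weak*
convergence gives `∫ f_k w_R → ∫ f w_R`. On `|v| > R` we have `|v| ≤ |v|² / R`, so
`|∫ h w - ∫ h w_R| ≤ ‖φ‖_∞ K / R` for every density `h` with second moment at most `K`; this
holds for all `f_k` and, testing against `1_{|v| ≤ n} |v|²` and letting `n → ∞`, also for the
limit `f`. The truncated integrals therefore converge uniformly in `k`, and the limits can be
interchanged.
-/

lemma MeasureTheory.MemLp.top_comp_quasiMeasurePreserving {α β E : Type*} [MeasurableSpace α]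
    [MeasurableSpace β] [NormedAddCommGroup E] {μ : Measure α} {ν : Measure β} {f : β → E}
    {g : α → β} (hf : MemLp f ∞ ν) (hg : Measure.QuasiMeasurePreserving g μ ν) :
    MemLp (f ∘ g) ∞ μ :=
  memLp_top_of_bound (hf.1.comp_quasiMeasurePreserving hg) _
    (hg.ae (ae_le_lpNorm_exponent_top hf))

lemma MeasureTheory.integrable_and_integral_le_of_lintegral_le {α : Type*} [MeasurableSpace α]
    {μ : Measure α} {g : α → ℝ} {K : ℝ} (hK : 0 ≤ K) (hg : AEStronglyMeasurable g μ)
    (hg0 : 0 ≤ᵐ[μ] g) (hle : ∫⁻ x, ENNReal.ofReal (g x) ∂μ ≤ ENNReal.ofReal K) :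
    Integrable g μ ∧ ∫ x, g x ∂μ ≤ K := by
  have hint : Integrable g μ :=
    ⟨hg, (hasFiniteIntegral_iff_ofReal hg0).2 (hle.trans_lt ofReal_lt_top)⟩
  refine ⟨hint, ?_⟩
  rwa [← ENNReal.ofReal_le_ofReal_iff hK, ofReal_integral_eq_lintegral_ofReal hint hg0]

section VelocityMoments

variable {α : Type*} [MeasurableSpace α] {μ : Measure α} {r : α → ℝ}

lemma integrable_indicator_setOf_le {g : α → ℝ} {R B : ℝ} (hr : Measurable r)
    (hfin : μ {x | r x ≤ R} ≠ ∞) (hg : AEStronglyMeasurable g μ)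
    (hgB : ∀ᵐ x ∂μ, r x ≤ R → ‖g x‖ ≤ B) :
    Integrable ({x | r x ≤ R}.indicator g) μ := by
  have hs : MeasurableSet {x | r x ≤ R} := measurableSet_le hr measurable_const
  exact (integrable_indicator_iff hs).2
    (Measure.integrableOn_of_bounded hfin hg ((ae_restrict_iff' hs).2 hgB))

lemma tendsto_lintegral_ofReal_mul_indicator_sq {f : α → ℝ} (hr : Measurable r)
    (hf : AEMeasurable f μ) (hf0 : 0 ≤ᵐ[μ] f) :
    Tendsto (fun n : ℕ => ∫⁻ x, ENNReal.ofReal (f x * {x | r x ≤ n}.indicator (r · ^ 2) x) ∂μ)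
      atTop (𝓝 (∫⁻ x, ENNReal.ofReal (r x ^ 2 * f x) ∂μ)) := by
  refine lintegral_tendsto_of_tendsto_of_monotone (fun n => (hf.mul ((hr.pow_const 2).indicator
    (measurableSet_le hr measurable_const)).aemeasurable).ennreal_ofReal) ?_ (ae_of_all _ ?_)
  · filter_upwards [hf0] with x hx n m hnm
    refine ENNReal.ofReal_le_ofReal (mul_le_mul_of_nonneg_left ?_ hx)
    exact Set.indicator_le_indicator_of_subset
      (fun y (hy : r y ≤ n) => show r y ≤ m from hy.trans (Nat.cast_le.2 hnm))
      (fun _ => by positivity) x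
  · intro x
    have hlim : Tendsto (fun n : ℕ => {x | r x ≤ n}.indicator (r · ^ 2) x) atTop (𝓝 (r x ^ 2)) :=
      tendsto_const_nhds.congr' <| (eventually_ge_atTop ⌈r x⌉₊).mono fun n hn =>
        (Set.indicator_of_mem (show x ∈ {x | r x ≤ n} from
          (Nat.le_ceil (r x)).trans (Nat.cast_le.2 hn)) _).symm
    rw [mul_comm (r x ^ 2)]
    exact (ENNReal.continuous_ofReal.tendsto _).comp (hlim.const_mul (f x))

lemma lintegral_ofReal_sq_mul_le_of_tendsto {fk : ℕ → α → ℝ} {f : α → ℝ} {C K : ℝ}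
    (hr : Measurable r) (hr0 : 0 ≤ r) (hfin : ∀ R, μ {x | r x ≤ R} ≠ ∞)
    (hfkm : ∀ k, AEStronglyMeasurable (fk k) μ) (hfm : AEStronglyMeasurable f μ)
    (hfkbd : ∀ k, ∀ᵐ x ∂μ, 0 ≤ fk k x ∧ fk k x ≤ C) (hfbd : ∀ᵐ x ∂μ, 0 ≤ f x ∧ f x ≤ C)
    (hconv : ∀ g : α → ℝ, Integrable g μ →
      Tendsto (fun k => ∫ x, fk k x * g x ∂μ) atTop (𝓝 (∫ x, f x * g x ∂μ)))
    (hmom : ∀ k, ∫⁻ x, ENNReal.ofReal (r x ^ 2 * fk k x) ∂μ ≤ ENNReal.ofReal K) :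
    ∫⁻ x, ENNReal.ofReal (r x ^ 2 * f x) ∂μ ≤ ENNReal.ofReal K := by
  set g : ℕ → α → ℝ := fun n => {x | r x ≤ n}.indicator (r · ^ 2)
  have hg_int : ∀ n, Integrable (g n) μ := fun n =>
    integrable_indicator_setOf_le hr (hfin n) (hr.pow_const 2).aestronglyMeasurable
      (B := (n : ℝ) ^ 2) <| ae_of_all _ fun x hx => by
        rw [Real.norm_of_nonneg (by positivity)]
        exact pow_le_pow_left₀ (hr0 x) hx 2
  have hofReal_integral : ∀ h : α → ℝ, AEStronglyMeasurable h μ →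
      (∀ᵐ x ∂μ, 0 ≤ h x ∧ h x ≤ C) → ∀ n,
      ENNReal.ofReal (∫ x, h x * g n x ∂μ) = ∫⁻ x, ENNReal.ofReal (h x * g n x) ∂μ :=
    fun h hh hbd n => ofReal_integral_eq_lintegral_ofReal
      ((hg_int n).bdd_mul hh (c := C)
        (hbd.mono fun x hx => by rw [Real.norm_of_nonneg hx.1]; exact hx.2))
      (hbd.mono fun x hx => mul_nonneg hx.1 (Set.indicator_nonneg (fun _ _ => by positivity) x))
  refine le_of_tendsto' (tendsto_lintegral_ofReal_mul_indicator_sq hr hfm.aemeasurable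
    (hfbd.mono fun x hx => hx.1)) fun n => ?_
  rw [← hofReal_integral f hfm hfbd n]
  refine le_of_tendsto' ((ENNReal.continuous_ofReal.tendsto _).comp (hconv _ (hg_int n)))
    fun k => ?_
  rw [Function.comp_apply, hofReal_integral (fk k) (hfkm k) (hfkbd k) n]
  refine (lintegral_mono_ae ?_).trans (hmom k)
  filter_upwards [hfkbd k] with x hx
  rw [mul_comm (r x ^ 2)]
  exact ENNReal.ofReal_le_ofReal
    (mul_le_mul_of_nonneg_left (Set.indicator_le_self' (fun _ _ => by positivity) x) hx.1)

lemma integrable_mul_mul_of_integrable_sq_mul {h ψ : α → ℝ} {C : ℝ} (hr : Measurable r)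
    (hr0 : 0 ≤ r) (hfin : μ {x | r x ≤ 1} ≠ ∞) (hh : AEStronglyMeasurable h μ)
    (hbd : ∀ᵐ x ∂μ, 0 ≤ h x ∧ h x ≤ C) (hψ : MemLp ψ ∞ μ)
    (hmom : Integrable (fun x => r x ^ 2 * h x) μ) :
    Integrable (fun x => r x * h x * ψ x) μ := by
  set M := lpNorm ψ ∞ μ
  have hs : MeasurableSet {x | r x ≤ 1} := measurableSet_le hr measurable_const
  have hbound : Integrable
      (fun x => {x | r x ≤ 1}.indicator (fun _ => C * M) x + M * (r x ^ 2 * h x)) μ :=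
    ((integrable_indicator_iff hs).2 (integrableOn_const hfin)).add (hmom.const_mul M)
  refine hbound.mono' ((hr.aestronglyMeasurable.mul hh).mul hψ.1) ?_
  filter_upwards [hbd, ae_le_lpNorm_exponent_top hψ] with x ⟨hx0, hxC⟩ hxM
  have hM : 0 ≤ M := lpNorm_nonneg
  have hrh : 0 ≤ r x * h x := mul_nonneg (hr0 x) hx0
  calc ‖r x * h x * ψ x‖ = r x * h x * ‖ψ x‖ := by rw [norm_mul, Real.norm_of_nonneg hrh]
    _ ≤ r x * h x * M := mul_le_mul_of_nonneg_left hxM hrh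
    _ ≤ _ := by
      by_cases h1 : r x ≤ 1
      · rw [Set.indicator_of_mem (show x ∈ {x | r x ≤ 1} from h1)]
        have : r x * h x ≤ C := by nlinarith [hr0 x]
        nlinarith [mul_nonneg hM (mul_nonneg (sq_nonneg (r x)) hx0)]
      · rw [Set.indicator_of_notMem (show x ∉ {x | r x ≤ 1} from h1), zero_add]
        have : r x * h x ≤ r x ^ 2 * h x := by nlinarith
        nlinarith [mul_le_mul_of_nonneg_right this hM]

lemma dist_integral_mul_mul_indicator_le {h ψ : α → ℝ} {R : ℝ} (hR : 0 < R)
    (hr : Measurable r) (hh0 : 0 ≤ᵐ[μ] h) (hψ : MemLp ψ ∞ μ)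
    (hint : Integrable (fun x => r x * h x * ψ x) μ)
    (hmom : Integrable (fun x => r x ^ 2 * h x) μ) :
    dist (∫ x, r x * h x * ψ x ∂μ)
        (∫ x, h x * {x | r x ≤ R}.indicator (fun x => r x * ψ x) x ∂μ)
      ≤ lpNorm ψ ∞ μ / R * ∫ x, r x ^ 2 * h x ∂μ := by
  set s := {x | r x ≤ R}
  have hs : MeasurableSet s := measurableSet_le hr measurable_const
  have hind : (fun x => h x * s.indicator (fun x => r x * ψ x) x)
      = s.indicator fun x => r x * h x * ψ x := by
    ext x
    by_cases hx : x ∈ s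
    · simp only [Set.indicator_of_mem hx]; ring
    · simp only [Set.indicator_of_notMem hx, mul_zero]
  rw [hind, integral_indicator hs, ← integral_add_compl hs hint, dist_eq_norm,
    add_sub_cancel_left, ← integral_indicator hs.compl, ← integral_const_mul]
  refine norm_integral_le_of_norm_le (hmom.const_mul _) ?_
  filter_upwards [hh0, ae_le_lpNorm_exponent_top hψ] with x hx0 hxM
  have hM : 0 ≤ lpNorm ψ ∞ μ := lpNorm_nonneg
  by_cases hxs : x ∈ sᶜ
  · have hRr : R < r x := not_le.1 hxs
    have hrh : 0 ≤ r x * h x := mul_nonneg (hR.le.trans hRr.le) hx0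
    rw [Set.indicator_of_mem hxs, norm_mul, Real.norm_of_nonneg hrh, div_mul_eq_mul_div,
      le_div_iff₀ hR]
    calc r x * h x * ‖ψ x‖ * R ≤ r x * h x * lpNorm ψ ∞ μ * r x := by gcongr
      _ = lpNorm ψ ∞ μ * (r x ^ 2 * h x) := by ring
  · rw [Set.indicator_of_notMem hxs, norm_zero]
    exact mul_nonneg (div_nonneg hM hR.le) (mul_nonneg (sq_nonneg _) hx0)

lemma integrable_mul_mul_and_dist_integral_indicator_le {h ψ : α → ℝ} {C K : ℝ}
    (hr : Measurable r) (hr0 : 0 ≤ r) (hfin : μ {x | r x ≤ 1} ≠ ∞)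
    (hh : AEStronglyMeasurable h μ) (hbd : ∀ᵐ x ∂μ, 0 ≤ h x ∧ h x ≤ C) (hK : 0 ≤ K)
    (hmom : ∫⁻ x, ENNReal.ofReal (r x ^ 2 * h x) ∂μ ≤ ENNReal.ofReal K) (hψ : MemLp ψ ∞ μ) :
    Integrable (fun x => r x * h x * ψ x) μ ∧ ∀ R, 0 < R →
      dist (∫ x, r x * h x * ψ x ∂μ)
          (∫ x, h x * {x | r x ≤ R}.indicator (fun x => r x * ψ x) x ∂μ)
        ≤ lpNorm ψ ∞ μ / R * K := by
  have hh0 : 0 ≤ᵐ[μ] h := hbd.mono fun x hx => hx.1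
  obtain ⟨hsq, hsqK⟩ := integrable_and_integral_le_of_lintegral_le hK
    ((hr.pow_const 2).aestronglyMeasurable.mul hh)
    (hh0.mono fun x hx => mul_nonneg (sq_nonneg _) hx) hmom
  have hint := integrable_mul_mul_of_integrable_sq_mul hr hr0 hfin hh hbd hψ hsq
  refine ⟨hint, fun R hR => ?_⟩
  refine (dist_integral_mul_mul_indicator_le hR hr hh0 hψ hint hsq).trans ?_
  exact mul_le_mul_of_nonneg_left hsqK (div_nonneg lpNorm_nonneg hR.le)

theorem tendsto_integral_mul_mul_of_weakStar {fk : ℕ → α → ℝ} {f ψ : α → ℝ} {C K : ℝ}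
    (hr : Measurable r) (hr0 : 0 ≤ r) (hfin : ∀ R, μ {x | r x ≤ R} ≠ ∞)
    (hfkm : ∀ k, AEStronglyMeasurable (fk k) μ) (hfm : AEStronglyMeasurable f μ)
    (hfkbd : ∀ k, ∀ᵐ x ∂μ, 0 ≤ fk k x ∧ fk k x ≤ C) (hfbd : ∀ᵐ x ∂μ, 0 ≤ f x ∧ f x ≤ C)
    (hconv : ∀ g : α → ℝ, Integrable g μ →
      Tendsto (fun k => ∫ x, fk k x * g x ∂μ) atTop (𝓝 (∫ x, f x * g x ∂μ)))
    (hK : 0 ≤ K) (hmom : ∀ k, ∫⁻ x, ENNReal.ofReal (r x ^ 2 * fk k x) ∂μ ≤ ENNReal.ofReal K)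
    (hψ : MemLp ψ ∞ μ) :
    Integrable (fun x => r x * f x * ψ x) μ ∧
      Tendsto (fun k => ∫ x, r x * fk k x * ψ x ∂μ) atTop (𝓝 (∫ x, r x * f x * ψ x ∂μ)) := by
  set M := lpNorm ψ ∞ μ
  set w : ℝ → α → ℝ := fun R => {x | r x ≤ R}.indicator fun x => r x * ψ x
  have hw : ∀ R, Integrable (w R) μ := fun R =>
    integrable_indicator_setOf_le hr (hfin R) (hr.aestronglyMeasurable.mul hψ.1) (B := |R| * M)
      ((ae_le_lpNorm_exponent_top hψ).mono fun x hxM hxR => by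
        rw [norm_mul, Real.norm_of_nonneg (hr0 x)]
        exact mul_le_mul (hxR.trans (le_abs_self R)) hxM (norm_nonneg _) (abs_nonneg R))
  have hδ : Tendsto (fun R : ℝ => M / R * K) atTop (𝓝 0) := by
    simpa using (tendsto_const_nhds.div_atTop tendsto_id).mul_const K
  have hfmom := lintegral_ofReal_sq_mul_le_of_tendsto hr hr0 hfin hfkm hfm hfkbd hfbd hconv hmom
  obtain ⟨hfint, hftail⟩ :=
    integrable_mul_mul_and_dist_integral_indicator_le hr hr0 (hfin 1) hfm hfbd hK hfmom hψ
  refine ⟨hfint, TendstoUniformly.tendsto_of_eventually_tendsto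
    (F := fun R k => ∫ x, fk k x * w R x ∂μ) (p := atTop) ?_
    (Eventually.of_forall fun R => hconv _ (hw R)) ?_⟩
  · rw [Metric.tendstoUniformly_iff]
    intro ε hε
    filter_upwards [hδ.eventually (gt_mem_nhds hε), eventually_gt_atTop 0] with R hRε hR k
    exact ((integrable_mul_mul_and_dist_integral_indicator_le hr hr0 (hfin 1) (hfkm k) (hfkbd k)
      hK (hmom k) hψ).2 R hR).trans_lt hRε
  · refine tendsto_iff_dist_tendsto_zero.2
      (squeeze_zero' (Eventually.of_forall fun _ => dist_nonneg) ?_ hδ)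
    filter_upwards [eventually_gt_atTop 0] with R hR
    rw [dist_comm]
    exact hftail R hR

end VelocityMoments

lemma μT_setOf_norm_le_ne_top (T R : ℝ) : μT T {z | ‖z.2.2‖ ≤ R} ≠ ∞ := by
  have hset : {z : ℝ × Torus3 × Vel3 | ‖z.2.2‖ ≤ R}
      = Set.univ ×ˢ (Set.univ ×ˢ Metric.closedBall 0 R) := by
    ext z; simp
  rw [μT, hset, Measure.volume_eq_prod, Measure.prod_prod, Measure.prod_prod,
    Measure.restrict_apply_univ, Real.volume_Ioo]
  exact ENNReal.mul_ne_top ofReal_ne_top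
    (ENNReal.mul_ne_top (measure_ne_top _ _) measure_closedBall_lt_top.ne)

lemma quasiMeasurePreserving_μT_νT (T : ℝ) :
    Measure.QuasiMeasurePreserving (fun z : ℝ × Torus3 × Vel3 => (z.1, z.2.1)) (μT T) (νT T) := by
  have hassoc := (measurePreserving_prodAssoc (volume.restrict (Set.Ioo 0 T))
    (volume : Measure Torus3) (volume : Measure Vel3)).symm
  rw [← Measure.volume_eq_prod] at hassoc
  exact Measure.quasiMeasurePreserving_fst.comp hassoc.quasiMeasurePreserving

theorem first_moment_weakstar_convergence_general (T : ℝ)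
    (C K : ℝ) (hK : 0 ≤ K)
    (fk : ℕ → ℝ × Torus3 × Vel3 → ℝ) (f : ℝ × Torus3 × Vel3 → ℝ)
    (hfkmeas : ∀ k, Measurable (fk k)) (hfmeas : Measurable f)
    (hfkbd : ∀ k, ∀ᵐ z ∂μT T, 0 ≤ fk k z ∧ fk k z ≤ C)
    (hfbd : ∀ᵐ z ∂μT T, 0 ≤ f z ∧ f z ≤ C)
    (hconv : ∀ g : ℝ × Torus3 × Vel3 → ℝ, Integrable g (μT T) →
      Tendsto (fun k => ∫ z, fk k z * g z ∂μT T) atTop (𝓝 (∫ z, f z * g z ∂μT T)))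
    (hmom : ∀ k, (∫⁻ z, ENNReal.ofReal (‖z.2.2‖ ^ 2 * fk k z) ∂μT T) ≤ ENNReal.ofReal K) :
    ∀ φ : ℝ × Torus3 → ℝ, Measurable φ → MemLp φ ⊤ (νT T) →
      (∀ᵐ q ∂νT T, 0 ≤ φ q) →
      Integrable (fun z => ‖z.2.2‖ * f z * φ (z.1, z.2.1)) (μT T) ∧
        Tendsto (fun k => ∫ z, ‖z.2.2‖ * fk k z * φ (z.1, z.2.1) ∂μT T) atTop
          (𝓝 (∫ z, ‖z.2.2‖ * f z * φ (z.1, z.2.1) ∂μT T)) := by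
  intro φ _ hφ _
  exact tendsto_integral_mul_mul_of_weakStar (r := fun z => ‖z.2.2‖) measurable_snd.snd.norm
    (fun _ => norm_nonneg _) (μT_setOf_norm_le_ne_top T)
    (fun k => (hfkmeas k).aestronglyMeasurable) hfmeas.aestronglyMeasurable hfkbd hfbd hconv
    hK hmom (hφ.top_comp_quasiMeasurePreserving (quasiMeasurePreserving_μT_νT T))

/-- A uniform second-moment bound upgrades weak* `L^∞` convergence of
the densities to convergence of the first absolute velocity moments against bounded
nonnegative weights. -/
theorem first_moment_weakstar_convergence (T : ℝ) (hT : 0 < T)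
    (C K : ℝ) (hC : 0 ≤ C) (hK : 0 ≤ K)
    (fk : ℕ → ℝ × Torus3 × Vel3 → ℝ) (f : ℝ × Torus3 × Vel3 → ℝ)
    (hfkmeas : ∀ k, Measurable (fk k)) (hfmeas : Measurable f)
    (hfkbd : ∀ k, ∀ᵐ z ∂μT T, 0 ≤ fk k z ∧ fk k z ≤ C)
    (hfbd : ∀ᵐ z ∂μT T, 0 ≤ f z ∧ f z ≤ C)
    (hconv : ∀ g : ℝ × Torus3 × Vel3 → ℝ, Integrable g (μT T) →
      Tendsto (fun k => ∫ z, fk k z * g z ∂μT T) atTop (𝓝 (∫ z, f z * g z ∂μT T)))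
    (hmom : ∀ k, (∫⁻ z, ENNReal.ofReal (‖z.2.2‖ ^ 2 * fk k z) ∂μT T) ≤ ENNReal.ofReal K) :
    ∀ φ : ℝ × Torus3 → ℝ, Measurable φ → MemLp φ ⊤ (νT T) →
      (∀ᵐ q ∂νT T, 0 ≤ φ q) →
      Integrable (fun z => ‖z.2.2‖ * f z * φ (z.1, z.2.1)) (μT T) ∧
        Tendsto (fun k => ∫ z, ‖z.2.2‖ * fk k z * φ (z.1, z.2.1) ∂μT T) atTop
          (𝓝 (∫ z, ‖z.2.2‖ * f z * φ (z.1, z.2.1) ∂μT T)) :=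
  first_moment_weakstar_convergence_general T C K hK fk f hfkmeas hfmeas hfkbd hfbd hconv hmom
end
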